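/- arXiv:2107.09107 — 2 statements merged into one kernel-verified Lean document; each statement's English description precedes it below -/
import Mathlib

section
/- For a = 2671465728531600 one has N_3(a) ≥ 30; in particular, a equals the multinomial coefficients 37!/(17!·11!·9!), 38!/(19!·11!·8!), 39!/(19!·14!·6!), 40!/(19!·16!·5!), and a!/((a-1)!·1!·0!), each with its permutations of the lower entries. -/
/-- `Nk k a` is the number of `k`-tuples `(m₁, …, m_k)` of nonnegative integers whose
multinomial coefficient `(m₁ + ⋯ + m_k)! / (m₁! ⋯ m_k!)` equals `a`. -/
noncomputable def Nk (k : ℕ) (a : ℕ) : ℕ :=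
  {m : Fin k → ℕ | Nat.multinomial Finset.univ m = a}.ncard

/-! Multinomial coefficients are invariant under permuting the entries, so each of the five
tuples contributes its six rearrangements, thirty distinct tuples in all. Counting them inside
the solution set needs it to be finite: an entry `mᵢ < ∑ m` satisfies
`mᵢ < (∑ m).choose mᵢ ≤ multinomial m`, and an entry `mᵢ = ∑ m` forces the coefficient
to be `1`. -/

open Finset

namespace Nat

theorem lt_choose_of_lt {n k : ℕ} (h : k < n) : k < n.choose k := by
  obtain ⟨q, rfl⟩ := Nat.exists_eq_add_of_lt h
  calc k < (k + 1).choose k := by simp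
    _ ≤ (k + q + 1).choose k := choose_le_choose k (by omega)

variable {ι : Type*} {s : Finset ι} {m : ι → ℕ} {i : ι}

theorem multinomial_eq_choose_mul_multinomial_erase [DecidableEq ι] (hi : i ∈ s) :
    multinomial s m = (∑ j ∈ s, m j).choose (m i) * multinomial (s.erase i) m := by
  rw [← insert_erase hi, multinomial_insert (notMem_erase i s), sum_insert (notMem_erase i s),
    erase_insert (notMem_erase i s)]

theorem lt_multinomial_of_lt_sum (hi : i ∈ s) (h : m i < ∑ j ∈ s, m j) :
    m i < multinomial s m := by
  classical
  rw [multinomial_eq_choose_mul_multinomial_erase hi]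
  exact (lt_choose_of_lt h).trans_le (Nat.le_mul_of_pos_right _ (multinomial_pos _ _))

theorem le_multinomial_of_ne_one (hi : i ∈ s) (h : multinomial s m ≠ 1) :
    m i ≤ multinomial s m := by
  classical
  rcases (single_le_sum (fun j _ => zero_le (m j)) hi).lt_or_eq with hlt | heq
  · exact (lt_multinomial_of_lt_sum hi hlt).le
  · have hsingle : ∀ j ∈ s, m j = Pi.single (M := fun _ => ℕ) i (m i) j := by
      intro j hj
      rcases eq_or_ne j i with rfl | hji
      · simp
      · rw [Pi.single_eq_of_ne hji]
        have := sum_erase_add s m hi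
        have := single_le_sum (fun j _ => zero_le (m j)) (mem_erase.2 ⟨hji, hj⟩)
        omega
    exact absurd ((multinomial_congr hsingle).trans (multinomial_single s i (m i))) h

theorem finite_setOf_multinomial_univ_eq [Fintype ι] {a : ℕ} (ha : a ≠ 1) :
    {m : ι → ℕ | multinomial univ m = a}.Finite :=
  (Set.Finite.pi fun _ => Set.finite_Iic a).subset fun _ hm i _ =>
    hm ▸ le_multinomial_of_ne_one (mem_univ i) (hm ▸ ha)

theorem multinomial_univ_comp_perm [Fintype ι] (m : ι → ℕ) (σ : Equiv.Perm ι) :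
    multinomial univ (m ∘ σ) = multinomial univ m := by
  simp only [multinomial, Function.comp_apply, Equiv.sum_comp, Equiv.prod_comp σ fun i => (m i)!]

theorem multinomial_univ_three_one_zero (n : ℕ) : multinomial univ ![n, 1, 0] = n + 1 := by
  rw [multinomial_univ_three, add_zero, factorial_succ, factorial_one, factorial_zero, mul_one,
    mul_one, Nat.mul_div_cancel _ (factorial_pos n)]

end Nat

def rearrangements {ι : Type*} [Fintype ι] [DecidableEq ι] (vs : Finset (ι → ℕ)) :
    Finset (ι → ℕ) :=
  vs.biUnion fun v => univ.image fun σ : Equiv.Perm ι => v ∘ σ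

theorem card_rearrangements_le_ncard_setOf_multinomial_univ_eq {ι : Type*} [Fintype ι]
    [DecidableEq ι] {vs : Finset (ι → ℕ)} {a : ℕ} (ha : a ≠ 1)
    (hvs : ∀ v ∈ vs, Nat.multinomial univ v = a) :
    #(rearrangements vs) ≤ {m : ι → ℕ | Nat.multinomial univ m = a}.ncard := by
  rw [← Set.ncard_coe_finset]
  refine Set.ncard_le_ncard ?_ (Nat.finite_setOf_multinomial_univ_eq ha)
  intro m hm
  simp only [rearrangements, coe_biUnion, coe_image, coe_univ, Set.image_univ, Set.mem_iUnion,
    Set.mem_range] at hm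
  obtain ⟨v, hv, σ, rfl⟩ := hm
  exact (Nat.multinomial_univ_comp_perm v σ).trans (hvs v hv)

theorem N3_big_value :
    30 ≤ Nk 3 2671465728531600 ∧
    Nat.multinomial Finset.univ ![17, 11, 9] = 2671465728531600 ∧
    Nat.multinomial Finset.univ ![19, 11, 8] = 2671465728531600 ∧
    Nat.multinomial Finset.univ ![19, 14, 6] = 2671465728531600 ∧
    Nat.multinomial Finset.univ ![19, 16, 5] = 2671465728531600 ∧
    Nat.multinomial Finset.univ ![2671465728531600 - 1, 1, 0] = 2671465728531600 := by
  have h1 : Nat.multinomial univ ![17, 11, 9] = 2671465728531600 := by decide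
  have h2 : Nat.multinomial univ ![19, 11, 8] = 2671465728531600 := by decide
  have h3 : Nat.multinomial univ ![19, 14, 6] = 2671465728531600 := by decide
  have h4 : Nat.multinomial univ ![19, 16, 5] = 2671465728531600 := by decide
  have h5 : Nat.multinomial univ ![2671465728531600 - 1, 1, 0] = 2671465728531600 :=
    Nat.multinomial_univ_three_one_zero _
  refine ⟨?_, h1, h2, h3, h4, h5⟩
  calc 30 = #(rearrangements {![17, 11, 9], ![19, 11, 8], ![19, 14, 6], ![19, 16, 5],
        ![2671465728531600 - 1, 1, 0]}) := by decide
    _ ≤ Nk 3 2671465728531600 :=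
      card_rearrangements_le_ncard_setOf_multinomial_univ_eq (by norm_num)
        (by simp [h1, h2, h3, h4, h5])
end

section
/- For every fixed integer k ≥ 2 there is a constant C > 0 such that for all M ≥ 3, the number of k-tuples (m_1, …, m_k) of nonnegative integers with m = m_1 + ⋯ + m_k, with 2 < (m_1 + ⋯ + m_k)!/(m_1! ⋯ m_k!) ≤ M, and with m_i ≤ m − 2 for every index i, is at most C · M^{1/2} · (log M)^{k-1}. -/
/-!
Write `n = m₁ + ⋯ + mₖ`. The multinomial coefficient dominates each `C(n, mᵢ)`. If some part
satisfies `2 ≤ mᵢ ≤ n - 2`, then `C(n, 2) ≤ C(n, mᵢ) ≤ M`, so `n = O(√M)`; otherwise all parts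
are at most `1` and `n ≤ k`. Every part `mⱼ` other than a largest one has `2 mⱼ ≤ n`, hence
`2 ^ mⱼ ≤ C(n, mⱼ) ≤ M` and `mⱼ ≤ log₂ M`. So the tuples lie in `k` boxes with one side `O(√M)`
and the other `k - 1` sides `O(log M)`.
-/

open Finset

namespace Nat

theorem two_pow_le_centralBinom (k : ℕ) : 2 ^ k ≤ centralBinom k := by
  induction k with
  | zero => simp
  | succ k ih =>
    have hrec := succ_mul_centralBinom_succ k
    refine Nat.le_of_mul_le_mul_left ?_ k.succ_pos
    calc (k + 1) * 2 ^ (k + 1) ≤ 2 * (2 * k + 1) * centralBinom k := by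
          rw [pow_succ]; nlinarith
      _ = (k + 1) * centralBinom (k + 1) := hrec.symm

theorem two_pow_le_choose {n k : ℕ} (h : 2 * k ≤ n) : 2 ^ k ≤ n.choose k :=
  (two_pow_le_centralBinom k).trans <| centralBinom_eq_two_mul_choose k ▸ choose_le_choose k h

theorem choose_le_choose_of_le_half {n a b : ℕ} (hab : a ≤ b) (hb : b ≤ n / 2) :
    n.choose a ≤ n.choose b := by
  induction b, hab using Nat.le_induction with
  | base => exact le_rfl
  | succ b _ ih => exact (ih (by omega)).trans (choose_le_succ_of_lt_half_left (by omega))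

theorem choose_two_le_choose {n r : ℕ} (hr : 2 ≤ r) (hrn : r + 2 ≤ n) :
    n.choose 2 ≤ n.choose r := by
  rcases le_or_gt r (n / 2) with hhalf | hhalf
  · exact choose_le_choose_of_le_half hr hhalf
  · rw [← choose_symm (show r ≤ n by omega)]
    exact choose_le_choose_of_le_half (by omega) (by omega)

theorem sub_one_le_sqrt_of_choose_two_le {n M : ℕ} (h : n.choose 2 ≤ M) :
    n - 1 ≤ sqrt (2 * M) := by
  have htwice : n * (n - 1) ≤ 2 * M := by
    rw [choose_two_right] at h
    have := Nat.div_mul_cancel (even_mul_pred_self n).two_dvd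
    omega
  exact le_sqrt.mpr <| (Nat.mul_le_mul_right _ (sub_le n 1)).trans htwice

theorem choose_sum_le_multinomial {ι : Type*} [DecidableEq ι] {s : Finset ι} (f : ι → ℕ)
    {i : ι} (hi : i ∈ s) : (∑ j ∈ s, f j).choose (f i) ≤ multinomial s f := by
  have h := multinomial_insert (notMem_erase i s) f
  rw [insert_erase hi, add_sum_erase s f hi] at h
  rw [h]
  exact Nat.le_mul_of_pos_right _ (multinomial_pos _ _)

end Nat

open Nat

section Tuples

variable {ι : Type*} [Fintype ι] [DecidableEq ι] {m : ι → ℕ} {M : ℕ}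

theorem sum_le_of_multinomial_le (hm : ∀ i, m i ≤ (∑ i, m i) - 2)
    (hM : multinomial univ m ≤ M) : ∑ i, m i ≤ Fintype.card ι + sqrt (2 * M) + 1 := by
  by_cases hsmall : ∀ i, m i ≤ 1
  · have : ∑ i, m i ≤ Fintype.card ι := by
      simpa using sum_le_card_nsmul univ (fun i => m i) 1 fun i _ => hsmall i
    omega
  · push Not at hsmall
    obtain ⟨i, hi⟩ := hsmall
    have hchoose : (∑ i, m i).choose 2 ≤ M :=
      (choose_two_le_choose hi (by have := hm i; omega)).trans <|
        (choose_sum_le_multinomial m (mem_univ i)).trans hM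
    have := sub_one_le_sqrt_of_choose_two_le hchoose
    omega

theorem le_log_of_multinomial_le {i j : ι} (hij : i ≠ j) (hji : m j ≤ m i)
    (hM : multinomial univ m ≤ M) : m j ≤ Nat.log 2 M := by
  have hpair : m i + m j ≤ ∑ l, m l := by
    rw [← sum_pair hij]
    exact sum_le_sum_of_subset (subset_univ _)
  refine le_log_of_pow_le one_lt_two ?_
  exact (two_pow_le_choose (by omega)).trans <|
    (choose_sum_le_multinomial m (mem_univ j)).trans hM

theorem card_piFinset_update_range (i : ι) (a b : ℕ) :
    (Fintype.piFinset (Function.update (fun _ => range b) i (range a))).card =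
      a * b ^ (Fintype.card ι - 1) := by
  have : ∀ j, (Function.update (fun _ => range b) i (range a) j).card =
      Function.update (fun _ => b) i a j := fun j => by
    rcases eq_or_ne j i with rfl | hj <;> simp [*]
  simp [Fintype.card_piFinset, this, prod_update_of_mem (mem_univ i), card_sdiff]

theorem exists_bounded_of_multinomial_le (hnontriv : 1 < multinomial univ m)
    (hm : ∀ i, m i ≤ (∑ i, m i) - 2) (hM : multinomial univ m ≤ M) :
    ∃ i, m i ≤ Fintype.card ι + sqrt (2 * M) + 1 ∧ ∀ j ≠ i, m j ≤ Nat.log 2 M := by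
  have : Nonempty ι := by
    by_contra hempty
    have : IsEmpty ι := not_nonempty_iff.mp hempty
    simp at hnontriv
  obtain ⟨i, -, hmax⟩ := exists_max_image univ m univ_nonempty
  refine ⟨i, ?_, fun j hji => le_log_of_multinomial_le hji.symm (hmax j (mem_univ j)) hM⟩
  exact (single_le_sum (fun l _ => zero_le (m l)) (mem_univ i)).trans
    (sum_le_of_multinomial_le hm hM)

theorem ncard_nontrivial_multinomial_le (M : ℕ) :
    {m : ι → ℕ | 2 < multinomial univ m ∧ multinomial univ m ≤ M ∧
        ∀ i, m i ≤ (∑ i, m i) - 2}.ncard ≤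
      Fintype.card ι * ((Fintype.card ι + sqrt (2 * M) + 2) *
        (Nat.log 2 M + 1) ^ (Fintype.card ι - 1)) := by
  let box : ι → Finset (ι → ℕ) := fun i => Fintype.piFinset
    (Function.update (fun _ => range (Nat.log 2 M + 1)) i
      (range (Fintype.card ι + sqrt (2 * M) + 2)))
  have hcover : {m : ι → ℕ | 2 < multinomial univ m ∧ multinomial univ m ≤ M ∧
      ∀ i, m i ≤ (∑ i, m i) - 2} ⊆ ↑(univ.biUnion box) := by
    rintro m ⟨hnontriv, hM, hm⟩
    obtain ⟨i, hi, hothers⟩ := exists_bounded_of_multinomial_le (by omega) hm hM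
    simp only [coe_biUnion, coe_univ, Set.mem_univ, Set.iUnion_true, Set.mem_iUnion, mem_coe,
      Fintype.mem_piFinset, box]
    refine ⟨i, fun j => ?_⟩
    rcases eq_or_ne j i with rfl | hji
    · simpa only [Function.update_self, mem_range] using Nat.lt_succ_of_le hi
    · simpa only [Function.update_of_ne hji, mem_range] using Nat.lt_succ_of_le (hothers j hji)
  calc _ ≤ (univ.biUnion box).card := by
        rw [← Set.ncard_coe_finset]; exact Set.ncard_le_ncard hcover (finite_toSet _)
    _ ≤ ∑ i, (box i).card := card_biUnion_le
    _ = _ := by simp only [box, card_piFinset_update_range, sum_const, Finset.card_univ, smul_eq_mul]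

end Tuples

theorem natCast_add_sqrt_two_mul_le (k : ℕ) {M : ℕ} (hM : 1 ≤ M) :
    ((k + sqrt (2 * M) + 2 : ℕ) : ℝ) ≤ (k + 4) * √M := by
  have hsqrtM : 1 ≤ √(M : ℝ) := Real.one_le_sqrt.mpr (by exact_mod_cast hM)
  have hsqrt : (sqrt (2 * M) : ℝ) ≤ 2 * √M :=
    calc (sqrt (2 * M) : ℝ) ≤ √((2 * M : ℕ) : ℝ) := Real.nat_sqrt_le_real_sqrt
      _ = √2 * √M := by push_cast; exact Real.sqrt_mul zero_le_two _
      _ ≤ 2 * √M := by gcongr; exact Real.sqrt_le_iff.mpr ⟨zero_le_two, by norm_num⟩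
  push_cast
  nlinarith

theorem natLog_two_add_one_le {M : ℕ} (hM : 3 ≤ M) :
    ((Nat.log 2 M + 1 : ℕ) : ℝ) ≤ 3 * Real.log M := by
  have hM' : (3 : ℝ) ≤ M := by exact_mod_cast hM
  have hlog : 1 ≤ Real.log M := by
    rw [Real.le_log_iff_exp_le (by linarith)]
    linarith [Real.exp_one_lt_d9]
  have hlog2 : Real.log M / Real.log 2 ≤ 2 * Real.log M := by
    rw [div_le_iff₀ (Real.log_pos one_lt_two)]
    nlinarith [Real.log_two_gt_d9]
  have := Real.natLog_le_logb M 2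
  push_cast at this ⊢
  rw [Real.logb] at this
  linarith

theorem count_nontrivial_multinomials (k : ℕ) (hk : 2 ≤ k) :
    ∃ C : ℝ, 0 < C ∧ ∀ M : ℕ, 3 ≤ M →
      (({m : Fin k → ℕ | 2 < Nat.multinomial Finset.univ m ∧
          Nat.multinomial Finset.univ m ≤ M ∧
          ∀ i, m i ≤ (∑ i, m i) - 2}.ncard : ℝ)) ≤
        C * Real.sqrt M * (Real.log M) ^ (k - 1) := by
  refine ⟨k * (k + 4) * 3 ^ (k - 1), by positivity, fun M hM => ?_⟩
  have hcount := ncard_nontrivial_multinomial_le (ι := Fin k) M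
  rw [Fintype.card_fin] at hcount
  calc _ ≤ ((k * ((k + sqrt (2 * M) + 2) * (Nat.log 2 M + 1) ^ (k - 1)) : ℕ) : ℝ) :=
        by exact_mod_cast hcount
    _ ≤ k * ((k + 4) * √M * (3 * Real.log M) ^ (k - 1)) := by
        push_cast
        gcongr
        · exact_mod_cast natCast_add_sqrt_two_mul_le k (by omega)
        · exact_mod_cast natLog_two_add_one_le hM
    _ = _ := by ring
end
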